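/- arXiv:math/0306001 — 4 statements merged into one kernel-verified Lean document; each statement's English description precedes it below -/
import Mathlib

section
/- Let k be a field, α ∈ k nonzero, and A = A_α the Gasharov–Peeva algebra. For each integer i, let d_i : A² → A² be the map given by the matrix [[x₁, αⁱx₃],[x₄, x₂]]. Then d_i ∘ d_{i+1} = 0 for all i. -/
open MvPolynomial in
/-- The Gasharov–Peeva ideal `I_α ⊆ k[X₁,…,X₅]` (variables indexed `0,…,4`). -/
noncomputable def gpIdeal (k : Type) [Field k] (α : k) : Ideal (MvPolynomial (Fin 5) k) :=
  Ideal.span {C α * X 0 * X 2 + X 1 * X 2,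
    X 0 * X 3 + X 1 * X 3,
    X 2 ^ 2 + C α * X 0 * X 4 - X 1 * X 4,
    X 3 ^ 2 + X 0 * X 4 - X 1 * X 4,
    X 0 ^ 2, X 1 ^ 2, X 2 * X 3, X 2 * X 4, X 3 * X 4, X 4 ^ 2}

/-- The Gasharov–Peeva algebra `A = A_α = k[X₁,…,X₅]/I_α`. -/
noncomputable abbrev GP (k : Type) [Field k] (α : k) : Type :=
  MvPolynomial (Fin 5) k ⧸ gpIdeal k α

/-- `x i` : the residue class of the variable `X i` in `A_α` (so `x₁ = gpx α 0`, …,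
`x₅ = gpx α 4`). -/
noncomputable def gpx {k : Type} [Field k] (α : k) (i : Fin 5) : GP k α :=
  Ideal.Quotient.mk _ (MvPolynomial.X i)

/-- The differential matrix `d_i = [[x₁, αⁱx₃], [x₄, x₂]]` over `A_α`. -/
noncomputable def gpd (k : Type) [Field k] (α : k) (i : ℤ) : Matrix (Fin 2) (Fin 2) (GP k α) :=
  !![gpx α 0, algebraMap k (GP k α) (α ^ i) * gpx α 2; gpx α 3, gpx α 1]


open MvPolynomial in
lemma gp_mk_zero {k : Type} [Field k] (α : k) (p : MvPolynomial (Fin 5) k)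
    (hp : p ∈ ({C α * X 0 * X 2 + X 1 * X 2,
    X 0 * X 3 + X 1 * X 3,
    X 2 ^ 2 + C α * X 0 * X 4 - X 1 * X 4,
    X 3 ^ 2 + X 0 * X 4 - X 1 * X 4,
    X 0 ^ 2, X 1 ^ 2, X 2 * X 3, X 2 * X 4, X 3 * X 4, X 4 ^ 2} :
      Set (MvPolynomial (Fin 5) k))) :
    Ideal.Quotient.mk (gpIdeal k α) p = 0 := by
  rw [Ideal.Quotient.eq_zero_iff_mem, gpIdeal]
  exact Ideal.subset_span hp

set_option maxHeartbeats 1000000 in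
open MvPolynomial in
theorem gp_mul_zero (k : Type) [Field k] (α : k) (hα : α ≠ 0) (i : ℤ) :
    gpd k α i * gpd k α (i + 1) = 0 := by
  have hC : (algebraMap k (GP k α)) α = Ideal.Quotient.mk (gpIdeal k α) (C α) := rfl
  have h11 : gpx α 0 * gpx α 0 = 0 := by
    rw [gpx, ← map_mul, ← sq]; exact gp_mk_zero α _ (by simp)
  have h22 : gpx α 1 * gpx α 1 = 0 := by
    rw [gpx, ← map_mul, ← sq]; exact gp_mk_zero α _ (by simp)
  have h34 : gpx α 2 * gpx α 3 = 0 := by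
    rw [gpx, gpx, ← map_mul]; exact gp_mk_zero α _ (by simp)
  have hg1 : algebraMap k (GP k α) α * (gpx α 0 * gpx α 2) + gpx α 1 * gpx α 2 = 0 := by
    have h := gp_mk_zero α (C α * X 0 * X 2 + X 1 * X 2) (by simp)
    rw [map_add, map_mul, map_mul, map_mul] at h
    rw [hC, gpx, gpx, gpx, ← mul_assoc]
    exact h
  have hg2 : gpx α 0 * gpx α 3 + gpx α 1 * gpx α 3 = 0 := by
    rw [gpx, gpx, gpx, ← map_mul, ← map_mul, ← map_add]
    exact gp_mk_zero α _ (by simp)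
  have hpow : algebraMap k (GP k α) (α ^ (i+1))
      = algebraMap k (GP k α) (α ^ i) * algebraMap k (GP k α) α := by
    rw [← map_mul, ← zpow_add_one₀ hα]
  set c := algebraMap k (GP k α) (α ^ i) with hc
  ext a b
  fin_cases a <;> fin_cases b <;>
    simp only [gpd, hpow, ← hc, Matrix.mul_apply, Fin.sum_univ_two, Matrix.cons_val',
      Matrix.cons_val_zero, Matrix.cons_val_one, Matrix.head_cons, Matrix.head_fin_const,
      Matrix.empty_val', Matrix.cons_val_fin_one, Matrix.zero_apply, Matrix.of_apply]
  · calc gpx α 0 * gpx α 0 + c * gpx α 2 * gpx α 3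
        = gpx α 0 * gpx α 0 + c * (gpx α 2 * gpx α 3) := by ring
      _ = 0 := by rw [h11, h34, mul_zero, add_zero]
  · calc gpx α 0 * (c * algebraMap k (GP k α) α * gpx α 2) + c * gpx α 2 * gpx α 1
        = c * (algebraMap k (GP k α) α * (gpx α 0 * gpx α 2) + gpx α 1 * gpx α 2) := by ring
      _ = 0 := by rw [hg1, mul_zero]
  · calc gpx α 3 * gpx α 0 + gpx α 1 * gpx α 3
        = gpx α 0 * gpx α 3 + gpx α 1 * gpx α 3 := by ring
      _ = 0 := hg2
  · calc gpx α 3 * (c * algebraMap k (GP k α) α * gpx α 2) + gpx α 1 * gpx α 1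
        = c * algebraMap k (GP k α) α * (gpx α 2 * gpx α 3) + gpx α 1 * gpx α 1 := by ring
      _ = 0 := by rw [h34, h22, mul_zero, add_zero]

set_option synthInstance.maxHeartbeats 400000
set_option maxHeartbeats 1000000

/-- For the maps `d_i : A² → A²` given by the matrices `[[x₁, αⁱx₃],[x₄, x₂]]`, one has
`d_i ∘ d_{i+1} = 0` for all `i`. -/
theorem stmt5 (k : Type) [Field k] (α : k) (hα : α ≠ 0) (i : ℤ) :
    (Matrix.toLin' (gpd k α i)).comp (Matrix.toLin' (gpd k α (i + 1))) = 0 := by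
  rw [← Matrix.toLin'_mul, gp_mul_zero k α hα i, map_zero]
end

section
/- Let k be a field, α ∈ k nonzero, A = A_α the Gasharov–Peeva algebra. For an integer q, let T_q = A/J_q where J_q = (x₁−x₂, x₁−α^q x₃, x₁−x₄, x₅). Then T_q has dimension 2 over k, with k-basis given by the images of 1 and x₁. -/
set_option synthInstance.maxHeartbeats 1000000
set_option maxHeartbeats 2000000

/-- `T_q = A/J_q` where `J_q = (x₁ − x₂, x₁ − α^q x₃, x₁ − x₄, x₅)`. -/
noncomputable abbrev Tq (k : Type) [Field k] (α : k) (q : ℤ) : Type :=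
  GP k α ⧸ Ideal.span {gpx α 0 - gpx α 1,
    gpx α 0 - algebraMap k (GP k α) (α ^ q) * gpx α 2,
    gpx α 0 - gpx α 3, gpx α 4}

/-! In `T_q` the relations of `J_q` make `x₂ = x₄ = x₁`, `x₃ = α⁻ᵠ x₁` and `x₅ = 0`, while
`x₁² = 0` already holds in `A_α`; hence `ε ↦ x₁` defines a surjection `k[ε] → T_q`. Conversely,
`(x₁, …, x₅) ↦ (ε, ε, α⁻ᵠ ε, ε, 0)` kills both `I_α` and `J_q`, giving the inverse map, so
`T_q ≅ k[ε]` and `1, x₁` is the image of the basis `1, ε`. -/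

open MvPolynomial DualNumber

namespace DualNumber

variable (R : Type*) [CommSemiring R]

/-- As an `R`-module, `R[ε]` is `R × R`. -/
noncomputable def basisOneEps : Module.Basis (Fin 2) R R[ε] := Module.Basis.finTwoProd R

@[simp]
lemma coe_basisOneEps : ⇑(basisOneEps R) = ![1, ε] := by
  funext i
  fin_cases i
  exacts [Module.Basis.finTwoProd_zero R, Module.Basis.finTwoProd_one R]

end DualNumber

namespace GP

variable {k : Type} [Field k] (α : k) (q : ℤ)

def dualPoint : Fin 5 → k[ε] := ![ε, ε, α ^ (-q) • ε, ε, 0]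

lemma gpIdeal_le_ker_aeval_dualPoint :
    gpIdeal k α ≤ RingHom.ker (aeval (R := k) (dualPoint α q)) := by
  rw [gpIdeal, Ideal.span_le]
  rintro p (rfl | rfl | rfl | rfl | rfl | rfl | rfl | rfl | rfl | rfl) <;>
    simp [dualPoint, mul_assoc, sq, eps_mul_eps]

noncomputable def toDualNumber : GP k α →ₐ[k] k[ε] :=
  Ideal.Quotient.liftₐ _ (aeval (dualPoint α q)) fun _ h => gpIdeal_le_ker_aeval_dualPoint α q h

lemma toDualNumber_gpx (i : Fin 5) : toDualNumber α q (gpx α i) = dualPoint α q i :=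
  aeval_X _ _

end GP

namespace Tq

variable {k : Type} [Field k] {α : k} {q : ℤ}

lemma mk_gpx_one : (Ideal.Quotient.mk _ (gpx α 1) : Tq k α q) = Ideal.Quotient.mk _ (gpx α 0) :=
  Eq.symm (Ideal.Quotient.eq.mpr (Ideal.subset_span (by simp)))

lemma mk_gpx_three :
    (Ideal.Quotient.mk _ (gpx α 3) : Tq k α q) = Ideal.Quotient.mk _ (gpx α 0) :=
  Eq.symm (Ideal.Quotient.eq.mpr (Ideal.subset_span (by simp)))

lemma mk_gpx_four : (Ideal.Quotient.mk _ (gpx α 4) : Tq k α q) = 0 :=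
  Ideal.Quotient.eq_zero_iff_mem.mpr (Ideal.subset_span (by simp))

lemma mk_gpx_two (hα : α ≠ 0) :
    (Ideal.Quotient.mk _ (gpx α 2) : Tq k α q) = α ^ (-q) • Ideal.Quotient.mk _ (gpx α 0) := by
  have h : (Ideal.Quotient.mk _ (gpx α 0) : Tq k α q) = α ^ q • Ideal.Quotient.mk _ (gpx α 2) :=
    (Ideal.Quotient.eq (y := algebraMap k _ (α ^ q) * gpx α 2)).mpr (Ideal.subset_span (by simp))
      |>.trans (Algebra.smul_def (α ^ q) (Ideal.Quotient.mk _ (gpx α 2) : Tq k α q)).symm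
  rw [h, smul_smul, ← zpow_add₀ hα, neg_add_cancel, zpow_zero, one_smul]

lemma mk_gpx_zero_mul_self :
    (Ideal.Quotient.mk _ (gpx α 0) * Ideal.Quotient.mk _ (gpx α 0) : Tq k α q) = 0 := by
  have h : gpx α 0 * gpx α 0 = 0 := by
    rw [gpx, ← map_mul, Ideal.Quotient.eq_zero_iff_mem, ← sq]
    exact Ideal.subset_span (by simp)
  rw [← map_mul, h, map_zero]

variable (q)

lemma span_le_ker_toDualNumber (hα : α ≠ 0) :
    Ideal.span {gpx α 0 - gpx α 1, gpx α 0 - algebraMap k (GP k α) (α ^ q) * gpx α 2,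
      gpx α 0 - gpx α 3, gpx α 4} ≤ RingHom.ker (GP.toDualNumber α q) := by
  rw [Ideal.span_le]
  rintro p (rfl | rfl | rfl | rfl) <;>
    simp [GP.toDualNumber_gpx, GP.dualPoint, ← Algebra.smul_def, smul_smul,
      mul_inv_cancel₀ (zpow_ne_zero q hα)]

noncomputable def toDualNumber (hα : α ≠ 0) : Tq k α q →ₐ[k] k[ε] :=
  Ideal.Quotient.liftₐ _ (GP.toDualNumber α q) fun _ h => span_le_ker_toDualNumber q hα h

lemma toDualNumber_mk_gpx (hα : α ≠ 0) (i : Fin 5) :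
    toDualNumber q hα (Ideal.Quotient.mk _ (gpx α i)) = GP.dualPoint α q i :=
  GP.toDualNumber_gpx α q i

noncomputable def ofDualNumber : k[ε] →ₐ[k] Tq k α q :=
  DualNumber.lift ⟨(Algebra.ofId _ _, Ideal.Quotient.mk _ (gpx α 0)),
    mk_gpx_zero_mul_self, fun a => (Algebra.commutes a _).symm⟩

lemma ofDualNumber_eps : ofDualNumber q ε = (Ideal.Quotient.mk _ (gpx α 0) : Tq k α q) := by
  rw [ofDualNumber, DualNumber.lift_apply_eps]

lemma ofDualNumber_dualPoint (hα : α ≠ 0) (i : Fin 5) :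
    ofDualNumber q (GP.dualPoint α q i) = (Ideal.Quotient.mk _ (gpx α i) : Tq k α q) := by
  fin_cases i <;>
    simp [GP.dualPoint, ofDualNumber_eps, mk_gpx_one, mk_gpx_two hα, mk_gpx_three, mk_gpx_four]

noncomputable def dualNumberEquiv (hα : α ≠ 0) : k[ε] ≃ₐ[k] Tq k α q :=
  AlgEquiv.ofAlgHom (ofDualNumber q) (toDualNumber q hα)
    (Ideal.Quotient.algHom_ext k <| Ideal.Quotient.algHom_ext k <| MvPolynomial.algHom_ext fun i =>
      (congrArg (ofDualNumber q) (toDualNumber_mk_gpx q hα i)).trans (ofDualNumber_dualPoint q hα i))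
    (DualNumber.algHom_ext (by simp [ofDualNumber_eps, toDualNumber_mk_gpx, GP.dualPoint]))

end Tq

/-- `T_q` is `2`-dimensional over `k`, with `k`-basis the images of `1` and `x₁`. -/
theorem stmt8 (k : Type) [Field k] (α : k) (hα : α ≠ 0) (q : ℤ) :
    Module.finrank k (Tq k α q) = 2 ∧
    (let b : Fin 2 → Tq k α q := ![1, Ideal.Quotient.mk _ (gpx α 0)];
      LinearIndependent k b ∧ Submodule.span k (Set.range b) = ⊤) := by
  let B := (basisOneEps k).map (Tq.dualNumberEquiv q hα).toLinearEquiv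
  have hB : ⇑B = ![1, Ideal.Quotient.mk _ (gpx α 0)] := by
    ext i
    fin_cases i <;> simp [B, Tq.dualNumberEquiv, Tq.ofDualNumber_eps]
  refine ⟨(Module.finrank_eq_card_basis B).trans (Fintype.card_fin 2), ?_⟩
  rw [← hB]
  exact ⟨B.linearIndependent, B.span_eq⟩
end

section
/- Let k be a field, α ∈ k nonzero, and A = A_α the Gasharov–Peeva algebra. Let U be the cokernel of the map A⁶ → A² given by the matrix [[x₃, 0, x₁, x₄, x₂, 0],[−x₂, x₃, −x₄, 0, 0, x₁]], and V = U ⊗_A A/(m², x₅) where m is the maximal ideal of A. Then V has dimension 4 over k, with basis the classes of (1,0), (0,1), (x₁,0), (0,x₂). -/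
set_option synthInstance.maxHeartbeats 1000000
set_option maxHeartbeats 2000000

/-- The maximal ideal `m = (x₁,…,x₅)` of `A_α`. -/
noncomputable abbrev gpm (k : Type) [Field k] (α : k) : Ideal (GP k α) :=
  Ideal.span {gpx α 0, gpx α 1, gpx α 2, gpx α 3, gpx α 4}

/-- The submodule of relations defining `V = U ⊗_A A/(m², x₅)`, where `U` is the cokernel
of the map `A⁶ → A²` with matrix `[[x₃, 0, x₁, x₄, x₂, 0],[−x₂, x₃, −x₄, 0, 0, x₁]]`:
the span of the six columns together with `(m² + (x₅))·A²`. -/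
noncomputable abbrev gpVrel (k : Type) [Field k] (α : k) :
    Submodule (GP k α) (Fin 2 → GP k α) :=
  Submodule.span (GP k α)
      {![gpx α 2, -(gpx α 1)], ![0, gpx α 2], ![gpx α 0, -(gpx α 3)],
        ![gpx α 3, 0], ![gpx α 1, 0], ![0, gpx α 0]}
    ⊔ (gpm k α ^ 2 ⊔ Ideal.span {gpx α 4}) • (⊤ : Submodule (GP k α) (Fin 2 → GP k α))

/-- The `A`-module `V = U ⊗_A A/(m², x₅)`. -/
noncomputable abbrev gpV (k : Type) [Field k] (α : k) : Type :=
  (Fin 2 → GP k α) ⧸ gpVrel k α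

/-! On `k⁴` let `x₁, x₂, x₃, x₄` act by the matrix units `e₀ ↦ e₂`, `e₁ ↦ e₃`, `e₀ ↦ e₃`,
`e₁ ↦ e₂` and `x₅` by `0`. These have pairwise zero products, so they define a representation of
`A` which kills `m²` and `x₅`, and `(a, b) ↦ a • e₀ + b • e₁` kills the six columns. The induced map
`V → k⁴` sends the four classes to the standard basis, so they are independent.

Conversely, modulo the relations `x₃ • (1,0) = (0,x₂)`, `x₄ • (0,1) = (x₁,0)`, the remaining
`xᵢ • (1,0)`, `xᵢ • (0,1)` are `0` or already among the four classes, and the products `xᵢ xⱼ`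
act by `0`. So the `k`-span of the four classes is stable under every `xᵢ`, hence is an
`A`-submodule, and it contains the generators `(1,0)`, `(0,1)` of `V`. -/

section QuotientMvPolynomial

open MvPolynomial

variable {σ k M : Type*} [CommRing k] {I : Ideal (MvPolynomial σ k)}
  [AddCommGroup M] [Module (MvPolynomial σ k ⧸ I) M] [Module k M]
  [IsScalarTower k (MvPolynomial σ k ⧸ I) M]

theorem Submodule.smul_mem_of_forall_mk_X_smul_mem (W : Submodule k M)
    (hW : ∀ i, ∀ w ∈ W, Ideal.Quotient.mk I (X i) • w ∈ W)
    (a : MvPolynomial σ k ⧸ I) {w : M} (hw : w ∈ W) : a • w ∈ W := by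
  obtain ⟨p, rfl⟩ := Ideal.Quotient.mk_surjective a
  induction p using MvPolynomial.induction_on generalizing w with
  | C c =>
    rw [← MvPolynomial.algebraMap_eq, ← Ideal.Quotient.mkₐ_eq_mk k, AlgHom.commutes,
      algebraMap_smul]
    exact W.smul_mem c hw
  | add p q hp hq => rw [map_add, add_smul]; exact W.add_mem (hp hw) (hq hw)
  | mul_X p i hp => rw [map_mul, mul_smul]; exact hp (hW i w hw)

end QuotientMvPolynomial

section GasharovPeeva

open MvPolynomial Matrix TrivSqZeroExt

variable {k : Type} [Field k]

theorem gpIdeal_le_ker_aeval (α : k) :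
    gpIdeal k α ≤ RingHom.ker (aeval (R := k) fun i => (inr (Pi.single i 1) :
      TrivSqZeroExt k (Fin 5 → k))) := by
  simp only [gpIdeal, Ideal.span_le, Set.insert_subset_iff, Set.singleton_subset_iff,
    SetLike.mem_coe, RingHom.mem_ker]
  simp [pow_two, mul_assoc]

/-- The first-order Taylor expansion `a ↦ (a(0), ∇a(0))` at the origin. -/
noncomputable def gpLinearPart (α : k) : GP k α →ₐ[k] TrivSqZeroExt k (Fin 5 → k) :=
  Ideal.Quotient.liftₐ _ _ fun _ hp => RingHom.mem_ker.mp (gpIdeal_le_ker_aeval α hp)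

theorem gpLinearPart_gpx (α : k) (i : Fin 5) :
    gpLinearPart α (gpx α i) = inr (Pi.single i 1) :=
  aeval_X _ i

def gpMat : Fin 5 → Matrix (Fin 4) (Fin 4) k :=
  ![single 2 0 1, single 3 1 1, single 3 0 1, single 2 1 1, 0]

theorem gpMat_mul_gpMat (i j : Fin 5) : (gpMat i * gpMat j : Matrix (Fin 4) (Fin 4) k) = 0 := by
  fin_cases i <;> fin_cases j <;> simp [gpMat]

theorem gpMat_combination_mul (x y : Fin 5 → k) :
    Fintype.linearCombination k (gpMat (k := k)) x * Fintype.linearCombination k gpMat y = 0 := by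
  simp [Fintype.linearCombination_apply, Finset.sum_mul, Finset.mul_sum,
    gpMat_mul_gpMat]

/-- `aeval` needs a commutative target, so the representation is factored through the
square-zero extension `k ⊕ k⁵`. -/
noncomputable def gpRep (α : k) : GP k α →ₐ[k] Matrix (Fin 4) (Fin 4) k :=
  (liftEquivOfComm ⟨_, gpMat_combination_mul⟩).comp (gpLinearPart α)

theorem gpRep_gpx (α : k) (i : Fin 5) : gpRep α (gpx α i) = gpMat i := by
  simp [gpRep, gpLinearPart_gpx, liftEquivOfComm, liftEquiv]

theorem gpRep_eq_zero_of_mem {α : k} {c : GP k α}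
    (hc : c ∈ gpm k α ^ 2 ⊔ Ideal.span {gpx α 4}) : gpRep α c = 0 := by
  suffices h : gpm k α ^ 2 ⊔ Ideal.span {gpx α 4} ≤ RingHom.ker (gpRep α) from h hc
  rw [sup_le_iff, pow_two, Ideal.span_mul_span', Ideal.span_le, Ideal.span_le,
    Set.mul_subset_iff]
  simp only [Set.mem_insert_iff, Set.mem_singleton_iff, Set.singleton_subset_iff, SetLike.mem_coe,
    RingHom.mem_ker]
  refine ⟨?_, by simp [gpRep_gpx, gpMat]⟩
  rintro _ (rfl | rfl | rfl | rfl | rfl) _ (rfl | rfl | rfl | rfl | rfl) <;>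
    simp [gpRep_gpx, gpMat_mul_gpMat]

noncomputable def gpCoord (α : k) : (Fin 2 → GP k α) →ₗ[k] (Fin 4 → k) where
  toFun v := gpRep α (v 0) *ᵥ Pi.single 0 1 + gpRep α (v 1) *ᵥ Pi.single 1 1
  map_add' v w := by simp only [Pi.add_apply, map_add, add_mulVec]; abel
  map_smul' c v := by simp [smul_mulVec, -mulVec_single]

theorem gpCoord_smul (α : k) (a : GP k α) (v : Fin 2 → GP k α) :
    gpCoord α (a • v) = gpRep α a *ᵥ gpCoord α v := by
  simp [gpCoord, mulVec_add, mulVec_mulVec, -mulVec_single]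

noncomputable def gpCoordKer (α : k) : Submodule (GP k α) (Fin 2 → GP k α) where
  carrier := {v | gpCoord α v = 0}
  add_mem' hv hw := by simp_all
  zero_mem' := map_zero _
  smul_mem' a v hv := by simp_all [gpCoord_smul]

theorem gpVrel_le_gpCoordKer (α : k) : gpVrel k α ≤ gpCoordKer α := by
  refine sup_le (Submodule.span_le.mpr ?_) (Submodule.smul_le.mpr fun c hc v _ => ?_)
  · simp only [Set.insert_subset_iff, Set.singleton_subset_iff, SetLike.mem_coe]
    simp [gpCoordKer, gpCoord, gpRep_gpx, gpMat, funext_iff, Fin.forall_fin_succ]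
  · show gpCoord α (c • v) = 0
    rw [gpCoord_smul, gpRep_eq_zero_of_mem hc, zero_mulVec]

noncomputable def gpVCoord (α : k) : gpV k α →ₗ[k] (Fin 4 → k) :=
  ((gpVrel k α).restrictScalars k).liftQ (gpCoord α) (fun _ hv => gpVrel_le_gpCoordKer α hv) ∘ₗ
    (Submodule.Quotient.restrictScalarsEquiv k (gpVrel k α)).symm.toLinearMap

theorem gpVCoord_mk (α : k) (v : Fin 2 → GP k α) :
    gpVCoord α (Submodule.Quotient.mk v) = gpCoord α v :=
  rfl

noncomputable def gpVFamily (α : k) : Fin 4 → gpV k α :=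
  ![Submodule.Quotient.mk ![1, 0], Submodule.Quotient.mk ![0, 1],
    Submodule.Quotient.mk ![gpx α 0, 0], Submodule.Quotient.mk ![0, gpx α 1]]

theorem gpVCoord_gpVFamily (α : k) (i : Fin 4) : gpVCoord α (gpVFamily α i) = Pi.single i 1 := by
  fin_cases i <;>
    simp [gpVFamily, gpVCoord_mk, gpCoord, gpRep_gpx, gpMat, funext_iff, Fin.forall_fin_succ,
      one_apply]

theorem linearIndependent_gpVFamily (α : k) : LinearIndependent k (gpVFamily α) := by
  refine LinearIndependent.of_comp (gpVCoord α) ?_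
  convert (Pi.basisFun k (Fin 4)).linearIndependent
  ext1 i
  simp [gpVCoord_gpVFamily]

theorem gpV_smul_eq_zero_of_mem {α : k} {c : GP k α}
    (hc : c ∈ gpm k α ^ 2 ⊔ Ideal.span {gpx α 4}) (v : gpV k α) : c • v = 0 := by
  obtain ⟨v, rfl⟩ := Submodule.Quotient.mk_surjective _ v
  rw [← Submodule.Quotient.mk_smul, Submodule.Quotient.mk_eq_zero]
  exact Submodule.mem_sup_right (Submodule.smul_mem_smul hc Submodule.mem_top)

@[simp]
theorem gpx_smul_gpx_smul (α : k) (i j : Fin 5) (v : gpV k α) : gpx α i • gpx α j • v = 0 := by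
  have hx : ∀ i, gpx α i ∈ gpm k α := by
    intro i; fin_cases i <;> exact Ideal.subset_span (by simp)
  exact (smul_smul (gpx α i) (gpx α j) v).trans (gpV_smul_eq_zero_of_mem
    (Ideal.mem_sup_left (pow_two (gpm k α) ▸ Ideal.mul_mem_mul (hx i) (hx j))) v)

@[simp]
theorem gpx_four_smul (α : k) (v : gpV k α) : gpx α 4 • v = 0 :=
  gpV_smul_eq_zero_of_mem (Ideal.mem_sup_right (Ideal.mem_span_singleton_self _)) v

/-- The literal `0 : GP k α` elaborates to the zero of `Submodule.Quotient`, which `simp` and `rw`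
do not match against `zero_smul`. -/
@[simp]
theorem gpV_zero_smul (α : k) (v : gpV k α) : (0 : GP k α) • v = 0 :=
  zero_smul (GP k α) v

theorem gpV_mk_eq (α : k) (v : Fin 2 → GP k α) :
    (Submodule.Quotient.mk v : gpV k α) =
      v 0 • Submodule.Quotient.mk ![1, 0] + v 1 • Submodule.Quotient.mk ![0, 1] := by
  rw [← Submodule.Quotient.mk_smul, ← Submodule.Quotient.mk_smul, ← Submodule.Quotient.mk_add]
  congr 1
  ext i
  fin_cases i <;> simp

theorem gpV_column_relations (α : k) :
    let e₀ : gpV k α := Submodule.Quotient.mk ![1, 0]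
    let e₁ : gpV k α := Submodule.Quotient.mk ![0, 1]
    gpx α 2 • e₀ = gpx α 1 • e₁ ∧ gpx α 2 • e₁ = 0 ∧ gpx α 3 • e₁ = gpx α 0 • e₀ ∧
      gpx α 3 • e₀ = 0 ∧ gpx α 1 • e₀ = 0 ∧ gpx α 0 • e₁ = 0 := by
  have hcol : ∀ v ∈ ({![gpx α 2, -(gpx α 1)], ![0, gpx α 2], ![gpx α 0, -(gpx α 3)],
      ![gpx α 3, 0], ![gpx α 1, 0], ![0, gpx α 0]} : Set (Fin 2 → GP k α)),
      (Submodule.Quotient.mk v : gpV k α) = 0 := fun v hv =>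
    (Submodule.Quotient.mk_eq_zero _).mpr (Submodule.mem_sup_left (Submodule.subset_span hv))
  simp only [Set.mem_insert_iff, Set.mem_singleton_iff, forall_eq_or_imp, forall_eq] at hcol
  obtain ⟨h₁, h₂, h₃, h₄, h₅, h₆⟩ := hcol
  rw [gpV_mk_eq] at h₁ h₂ h₃ h₄ h₅ h₆
  simp only [cons_val_zero, cons_val_one, neg_smul, gpV_zero_smul, add_zero, zero_add,
    ← sub_eq_add_neg, sub_eq_zero] at h₁ h₂ h₃ h₄ h₅ h₆
  exact ⟨h₁, h₂, h₃.symm, h₄, h₅, h₆⟩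

theorem span_gpVFamily (α : k) : Submodule.span k (Set.range (gpVFamily α)) = ⊤ := by
  set W := Submodule.span k (Set.range (gpVFamily α))
  have hgen : ∀ j, gpVFamily α j ∈ W := fun j => Submodule.subset_span ⟨j, rfl⟩
  have hfam : gpVFamily α = ![Submodule.Quotient.mk ![1, 0], Submodule.Quotient.mk ![0, 1],
      gpx α 0 • Submodule.Quotient.mk ![1, 0], gpx α 1 • Submodule.Quotient.mk ![0, 1]] := by
    ext j
    fin_cases j
    iterate 2 rfl
    all_goals
      dsimp [gpVFamily]
      rw [gpV_mk_eq]
      simp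
  obtain ⟨h₂₀, h₂₁, h₃₁, h₃₀, h₁₀, h₀₁⟩ := gpV_column_relations α
  have hx : ∀ i, ∀ w ∈ W, gpx α i • w ∈ W := by
    intro i w hw
    induction hw using Submodule.span_induction with
    | mem w hw =>
      obtain ⟨j, rfl⟩ := hw
      rw [hfam] at hgen ⊢
      fin_cases i <;> fin_cases j <;>
        simp [h₂₀, h₂₁, h₃₁, h₃₀, h₁₀, h₀₁] <;> first | exact hgen 2 | exact hgen 3
    | zero => simp
    | add u v _ _ hu hv => rw [smul_add]; exact W.add_mem hu hv
    | smul c w _ hw => rw [smul_comm]; exact W.smul_mem c hw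
  refine eq_top_iff.mpr fun v _ => ?_
  obtain ⟨v, rfl⟩ := Submodule.Quotient.mk_surjective _ v
  rw [gpV_mk_eq]
  exact W.add_mem (Submodule.smul_mem_of_forall_mk_X_smul_mem W hx (v 0) (hgen 0))
    (Submodule.smul_mem_of_forall_mk_X_smul_mem W hx (v 1) (hgen 1))

end GasharovPeeva

theorem stmt12_general (k : Type) [Field k] (α : k) :
    Module.finrank k (gpV k α) = 4 ∧
    (let b : Fin 4 → gpV k α :=
      ![Submodule.Quotient.mk ![1, 0], Submodule.Quotient.mk ![0, 1],
        Submodule.Quotient.mk ![gpx α 0, 0], Submodule.Quotient.mk ![0, gpx α 1]];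
      LinearIndependent k b ∧ Submodule.span k (Set.range b) = ⊤) := by
  have hli := linearIndependent_gpVFamily α
  have hspan := span_gpVFamily α
  refine ⟨?_, hli, hspan⟩
  rw [Module.finrank_eq_card_basis (Module.Basis.mk hli hspan.ge), Fintype.card_fin]

/-- `V` is `4`-dimensional over `k`, with basis the classes of
`(1,0), (0,1), (x₁,0), (0,x₂)`. -/
theorem stmt12 (k : Type) [Field k] (α : k) (hα : α ≠ 0) :
    Module.finrank k (gpV k α) = 4 ∧
    (let b : Fin 4 → gpV k α :=
      ![Submodule.Quotient.mk ![1, 0], Submodule.Quotient.mk ![0, 1],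
        Submodule.Quotient.mk ![gpx α 0, 0], Submodule.Quotient.mk ![0, gpx α 1]];
      LinearIndependent k b ∧ Submodule.span k (Set.range b) = ⊤) :=
  stmt12_general k α
end

section
/- Let k be a field, α ∈ k nonzero, A = A_α the Gasharov–Peeva algebra, and let N be a finitely generated A-module. For each integer i, let Ω_i be the 2e×2e matrix over k (e = dim_k N) given in block form by [[χ₁, αⁱχ₃],[χ₄, χ₂]], where χ_j is the matrix of multiplication by x_j on N with respect to a fixed k-basis. Let r = max_i rank Ω_i and c(N) = dim_k N − dim_k Socle(N). If α has infinite order in k^×, then rank Ω_i < r for at most c(N) values of i ∈ ℤ. -/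
set_option synthInstance.maxHeartbeats 1000000
set_option maxHeartbeats 2000000

/-!
Write `Ω_i = A + αⁱ B` with `A = [[χ₁, 0], [χ₄, χ₂]]` and `B = [[0, χ₃], [0, 0]]`. Choose `i₀`
with `rank Ω_{i₀} = r` and an `r × r` minor of `Ω_{i₀}` that does not vanish. The same minor of
`A + y B` is a polynomial `Δ(y)`, nonzero because `Δ(α^{i₀}) ≠ 0`. After column operations only
`rank B` columns of `A + y B` depend on `y`, so `deg Δ ≤ rank B = rank χ₃`. Since `x₃` kills the
socle, the socle lies in `ker χ₃`, so `rank χ₃ ≤ c(N)`. Every `i` with `rank Ω_i < r` makes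
`αⁱ` a root of `Δ`, and the `αⁱ` are pairwise distinct because `α` has infinite order.
-/

open Matrix Polynomial Module

namespace Matrix

variable {K : Type*} [Field K] {m n : Type*} [Fintype n]

theorem exists_linearIndependent_cols (A : Matrix m n K) :
    ∃ g : Fin A.rank → n, LinearIndependent K (fun j => A.col (g j)) := by
  obtain ⟨κ, a, ha, hspan, hli⟩ := exists_linearIndependent' K A.col
  have : Finite κ := Finite.of_injective a ha
  have : Fintype κ := Fintype.ofFinite κ
  have hcard : Fintype.card κ = A.rank := by
    rw [rank_eq_finrank_span_cols, ← hspan, finrank_span_eq_card hli]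
  let σ : Fin A.rank ≃ κ := (Fintype.equivFinOfCardEq hcard).symm
  exact ⟨a ∘ σ, hli.comp σ σ.injective⟩

theorem exists_submatrix_det_ne_zero [Fintype m] (A : Matrix m n K) :
    ∃ (f : Fin A.rank → m) (g : Fin A.rank → n), (A.submatrix f g).det ≠ 0 := by
  obtain ⟨g, hg⟩ := A.exists_linearIndependent_cols
  have hrank : (Aᵀ.submatrix g id).rank = A.rank := by
    simpa using LinearIndependent.rank_matrix (M := Aᵀ.submatrix g id) hg
  obtain ⟨f, hf⟩ := (Aᵀ.submatrix g id).exists_linearIndependent_cols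
  refine ⟨f ∘ Fin.cast hrank.symm, g, ?_⟩
  have hrows : LinearIndependent K (A.submatrix (f ∘ Fin.cast hrank.symm) g).row :=
    hf.comp _ (Fin.cast_injective _)
  exact (isUnit_iff_isUnit_det _).mp (linearIndependent_rows_iff_isUnit.mp hrows) |>.ne_zero

theorem le_rank_of_submatrix_det_ne_zero {p : ℕ} (A : Matrix m n K) (f : Fin p → m)
    (g : Fin p → n) (h : (A.submatrix f g).det ≠ 0) : p ≤ A.rank := by
  simpa [rank_of_det_ne_zero h] using A.rank_submatrix_le f g

theorem natDegree_det_le_sum {R : Type*} [CommRing R] [DecidableEq n] (M : Matrix n n R[X])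
    (d : n → ℕ) (h : ∀ i j, (M i j).natDegree ≤ d j) : M.det.natDegree ≤ ∑ j, d j := by
  rw [det_apply']
  refine natDegree_sum_le_of_forall_le _ _ fun σ _ => ?_
  refine natDegree_mul_le.trans ?_
  rw [natDegree_intCast, zero_add]
  exact (natDegree_prod_le _ _).trans (Finset.sum_le_sum fun j _ => h (σ j) j)

theorem exists_isUnit_det_mul_col_eq_zero [DecidableEq n] (B : Matrix n n K) :
    ∃ Q : Matrix n n K, IsUnit Q.det ∧
      ∃ s : Finset n, s.card = B.rank ∧ ∀ j ∉ s, (B * Q).col j = 0 := by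
  set V := LinearMap.ker B.mulVecLin
  obtain ⟨W, hW⟩ := Submodule.exists_isCompl V
  -- the columns of `Q` are a basis of `W` followed by a basis of `V = ker B`
  have hdim : finrank K W + finrank K V = Fintype.card n := by
    simpa using Submodule.finrank_add_eq_of_isCompl hW.symm
  have hrank : B.rank + finrank K V = Fintype.card n :=
    (LinearMap.finrank_range_add_finrank_ker B.mulVecLin).trans (by simp)
  let u := ((finBasis K W).prod (finBasis K V)).map (Submodule.prodEquivOfIsCompl W V hW.symm)
  let σ : n ≃ Fin (finrank K W) ⊕ Fin (finrank K V) := Fintype.equivOfCardEq <| by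
    rw [Fintype.card_sum, Fintype.card_fin, Fintype.card_fin]
    omega
  refine ⟨of fun i j => u (σ j) i, ?_,
    Finset.univ.map (Function.Embedding.inl.trans σ.symm.toEmbedding), ?_, ?_⟩
  · refine (isUnit_iff_isUnit_det _).mp (linearIndependent_cols_iff_isUnit.mp ?_)
    exact u.linearIndependent.comp σ σ.injective
  · rw [Finset.card_map, Finset.card_univ, Fintype.card_fin]
    omega
  · intro j hj
    obtain ⟨l, hl⟩ : ∃ l, σ j = .inr l := by
      rcases hσ : σ j with l | l
      · exact absurd (Finset.mem_map.mpr ⟨l, Finset.mem_univ _, by simp [← hσ]⟩) hj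
      · exact ⟨l, rfl⟩
    have hker : u (.inr l) ∈ V := by simp [u]
    ext i
    simpa [V, mul_apply, mulVec, dotProduct, hl] using congrFun hker i

theorem natDegree_det_map_C_add_X_smul_le_rank [DecidableEq n] (A B : Matrix n n K) :
    (A.map C + (X : K[X]) • B.map C).det.natDegree ≤ B.rank := by
  obtain ⟨Q, hQ, s, hs, hBQ⟩ := B.exists_isUnit_det_mul_col_eq_zero
  have hmul : (A.map C + (X : K[X]) • B.map C) * Q.map C =
      (A * Q).map C + (X : K[X]) • (B * Q).map C := by
    rw [add_mul, smul_mul, Matrix.map_mul, Matrix.map_mul]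
  have hdet : ((A.map C + (X : K[X]) • B.map C) * Q.map C).det.natDegree =
      (A.map C + (X : K[X]) • B.map C).det.natDegree := by
    rw [det_mul, show (Q.map C).det = C Q.det from (RingHom.map_det C Q).symm,
      natDegree_mul_C hQ.ne_zero]
  rw [← hdet, hmul, ← hs]
  refine (natDegree_det_le_sum _ (fun j => if j ∈ s then 1 else 0) fun i j => ?_).trans
    (by simp)
  by_cases hj : j ∈ s
  · simp only [hj, if_true, add_apply, map_apply, smul_apply, smul_eq_mul]
    compute_degree
  · have hzero : (B * Q) i j = 0 := congrFun (hBQ j hj) i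
    simp only [hj, if_false, add_apply, map_apply, smul_apply, smul_eq_mul, hzero, C_0,
      mul_zero, add_zero, natDegree_C, le_refl]

theorem eval_det_map_C_add_X_smul [DecidableEq n] (A B : Matrix n n K) (y : K) :
    (A.map C + (X : K[X]) • B.map C).det.eval y = (A + y • B).det := by
  rw [← coe_evalRingHom, RingHom.map_det]
  congr 1
  ext i j
  simp only [RingHom.mapMatrix_apply, map_apply, add_apply, smul_apply, smul_eq_mul,
    coe_evalRingHom, eval_add, eval_mul, eval_C, eval_X]

theorem setOf_rank_add_smul_lt_finite_and_ncard_le [Fintype m] (A B : Matrix m n K) (y₀ : K) :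
    {y : K | (A + y • B).rank < (A + y₀ • B).rank}.Finite ∧
      {y : K | (A + y • B).rank < (A + y₀ • B).rank}.ncard ≤ B.rank := by
  obtain ⟨f, g, hfg⟩ := (A + y₀ • B).exists_submatrix_det_ne_zero
  set P := ((A.submatrix f g).map C + (X : K[X]) • (B.submatrix f g).map C).det
  have hP : ∀ y, P.eval y = ((A + y • B).submatrix f g).det := fun y => by
    rw [eval_det_map_C_add_X_smul]
    rfl
  have hP0 : P ≠ 0 := fun h => hfg (by rw [← hP, h, eval_zero])
  have hroots : {y : K | (A + y • B).rank < (A + y₀ • B).rank} ⊆ P.rootSet K := fun y hy => by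
    refine (mem_rootSet_of_ne hP0).mpr ?_
    by_contra h
    rw [coe_aeval_eq_eval, hP] at h
    exact (le_rank_of_submatrix_det_ne_zero _ f g h).not_gt hy
  have hdeg : P.natDegree ≤ B.rank :=
    (natDegree_det_map_C_add_X_smul_le_rank _ _).trans (rank_submatrix_le B f g)
  exact ⟨(rootSet_finite P K).subset hroots,
    (Set.ncard_le_ncard hroots (rootSet_finite P K)).trans ((ncard_rootSet_le P K).trans hdeg)⟩

theorem rank_fromBlocks_zero_zero_zero_le {l o : Type*} [Fintype l] [Fintype o] [DecidableEq l]
    [DecidableEq o] (B : Matrix l o K) :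
    (fromBlocks (0 : Matrix l n K) B (0 : Matrix m n K) 0).rank ≤ B.rank := by
  have hrows : fromBlocks (0 : Matrix l n K) B (0 : Matrix m n K) 0 =
      fromRows (1 : Matrix l l K) 0 * fromCols 0 B := by
    rw [fromRows_mul_fromCols]
    simp
  have hcols :
      fromCols (0 : Matrix l n K) B = B * fromCols (0 : Matrix o n K) (1 : Matrix o o K) := by
    rw [mul_fromCols]
    simp
  rw [hrows, hcols]
  exact (rank_mul_le_right _ _).trans (rank_mul_le_left _ _)

end Matrix

section Socle

variable {R A M : Type*} [Field R] [CommSemiring A] [Algebra R A] [AddCommMonoid M] [Module A M]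

def RestrictScalars.linearMap {M' : Type*} [AddCommMonoid M'] [Module A M'] (f : M →ₗ[A] M') :
    RestrictScalars R A M →ₗ[R] RestrictScalars R A M' where
  toFun := f
  map_add' := f.map_add
  map_smul' c := f.map_smul (algebraMap R A c)

variable {ι : Type*} [Fintype ι] [DecidableEq ι]

theorem Matrix.finrank_restrictScalars_torsionBySet_le_finrank_ker
    (b : Basis ι R (RestrictScalars R A M)) (χ : Matrix ι ι R) {s : Set A} {a : A} (ha : a ∈ s)
    (hχ : ∀ v, RestrictScalars.addEquiv R A M (Matrix.toLin b b χ v) =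
      a • RestrictScalars.addEquiv R A M v) :
    finrank R (RestrictScalars R A (Submodule.torsionBySet A M s)) ≤
      finrank R (LinearMap.ker χ.mulVecLin) := by
  let incl := RestrictScalars.linearMap (R := R) (Submodule.torsionBySet A M s).subtype
  have hincl : ∀ v, Matrix.toLin b b χ (incl v) = 0 := fun v =>
    (RestrictScalars.addEquiv R A M).injective <| by
      rw [hχ, map_zero]
      exact (Submodule.mem_torsionBySet_iff _ _).mp v.2 ⟨a, ha⟩
  let F := b.equivFun.toLinearMap ∘ₗ incl
  have hF : ∀ v, F v ∈ LinearMap.ker χ.mulVecLin := fun v => by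
    simp only [F, LinearMap.mem_ker, mulVecLin_apply, LinearMap.coe_comp, LinearEquiv.coe_coe,
      Function.comp_apply, Basis.equivFun_apply]
    rw [← Matrix.repr_toLin b b χ, hincl, map_zero, Finsupp.coe_zero]
  refine LinearMap.finrank_le_finrank_of_injective (f := F.codRestrict _ hF) fun v w h => ?_
  exact Subtype.ext (b.equivFun.injective (congrArg Subtype.val h))

theorem Matrix.rank_add_finrank_torsionBySet_le (b : Basis ι R (RestrictScalars R A M))
    (χ : Matrix ι ι R) {s : Set A} {a : A} (ha : a ∈ s)
    (hχ : ∀ v, RestrictScalars.addEquiv R A M (Matrix.toLin b b χ v) =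
      a • RestrictScalars.addEquiv R A M v) :
    χ.rank + finrank R (RestrictScalars R A (Submodule.torsionBySet A M s)) ≤
      finrank R (RestrictScalars R A M) := by
  calc χ.rank + finrank R (RestrictScalars R A (Submodule.torsionBySet A M s))
      ≤ χ.rank + finrank R (LinearMap.ker χ.mulVecLin) :=
        Nat.add_le_add_left (χ.finrank_restrictScalars_torsionBySet_le_finrank_ker b ha hχ) _
    _ = Fintype.card ι := by
        rw [rank, LinearMap.finrank_range_add_finrank_ker, finrank_fintype_fun_eq_card]
    _ = finrank R (RestrictScalars R A M) := (finrank_eq_card_basis b).symm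

end Socle

theorem zpow_injective_of_forall_pow_ne_one {G₀ : Type*} [GroupWithZero G₀] {a : G₀}
    (ha : a ≠ 0) (h : ∀ n : ℕ, 0 < n → a ^ n ≠ 1) : Function.Injective fun i : ℤ => a ^ i := by
  have hu : ¬IsOfFinOrder (Units.mk0 a ha) := fun hfin => by
    obtain ⟨n, hn, h1⟩ := isOfFinOrder_iff_pow_eq_one.mp hfin
    exact h n hn (by simpa [Units.ext_iff] using h1)
  intro i j hij
  exact injective_zpow_iff_not_isOfFinOrder.mpr hu (Units.ext (by simpa using hij))

theorem stmt18_general (k : Type) [Field k] (α : k) (hα : α ≠ 0)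
    (hord : ∀ n : ℕ, 0 < n → α ^ n ≠ 1)
    (N : Type) [AddCommGroup N] [Module (GP k α) N]
    (e : ℕ) (b : Module.Basis (Fin e) k (RestrictScalars k (GP k α) N))
    (χ : Fin 5 → Matrix (Fin e) (Fin e) k)
    (hχ : ∀ j : Fin 5, ∀ v : RestrictScalars k (GP k α) N,
      RestrictScalars.addEquiv k (GP k α) N ((Matrix.toLin b b (χ j)) v) =
        gpx α j • RestrictScalars.addEquiv k (GP k α) N v)
    (Ω : ℤ → Matrix (Fin e ⊕ Fin e) (Fin e ⊕ Fin e) k)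
    (hΩ : ∀ i : ℤ, Ω i = Matrix.fromBlocks (χ 0) ((α ^ i) • χ 2) (χ 3) (χ 1))
    (r : ℕ) (hr : r = ⨆ i : ℤ, (Ω i).rank)
    (c : ℕ)
    (hc : c = Module.finrank k (RestrictScalars k (GP k α) N) -
      Module.finrank k (RestrictScalars k (GP k α)
        (Submodule.torsionBySet (GP k α) N ((gpm k α : Ideal (GP k α)) : Set (GP k α))))) :
    {i : ℤ | (Ω i).rank < r}.Finite ∧ Nat.card {i : ℤ | (Ω i).rank < r} ≤ c := by
  set A : Matrix (Fin e ⊕ Fin e) (Fin e ⊕ Fin e) k := fromBlocks (χ 0) 0 (χ 3) (χ 1)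
  set B : Matrix (Fin e ⊕ Fin e) (Fin e ⊕ Fin e) k := fromBlocks 0 (χ 2) 0 0
  have hΩAB : ∀ i : ℤ, Ω i = A + α ^ i • B := fun i => by
    rw [hΩ, fromBlocks_smul, fromBlocks_add]
    simp
  obtain ⟨i₀, hi₀⟩ : ∃ i₀, (Ω i₀).rank = r := by
    have hbdd : BddAbove (Set.range fun i => (Ω i).rank) :=
      ⟨_, Set.forall_mem_range.mpr fun i => (Ω i).rank_le_card_width⟩
    obtain ⟨i₀, hi₀⟩ := Nat.sSup_mem (Set.range_nonempty _) hbdd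
    exact ⟨i₀, hi₀.trans hr.symm⟩
  have hBc : B.rank ≤ c := by
    have hx₃ : gpx α 2 ∈ (gpm k α : Set (GP k α)) := Ideal.subset_span (by simp)
    have hsocle := (χ 2).rank_add_finrank_torsionBySet_le b hx₃ (hχ 2)
    have hBχ : B.rank ≤ (χ 2).rank := (χ 2).rank_fromBlocks_zero_zero_zero_le
    omega
  obtain ⟨hfin, hcard⟩ := setOf_rank_add_smul_lt_finite_and_ncard_le A B (α ^ i₀)
  have hpre : {i : ℤ | (Ω i).rank < r} =
      (fun i : ℤ => α ^ i) ⁻¹' {y | (A + y • B).rank < (A + α ^ i₀ • B).rank} := by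
    simp only [← hi₀, hΩAB]
    rfl
  have hinj := zpow_injective_of_forall_pow_ne_one hα hord
  rw [hpre, Nat.card_coe_set_eq]
  refine ⟨hfin.preimage hinj.injOn, le_trans ?_ (hcard.trans hBc)⟩
  exact Set.ncard_le_ncard_of_injOn (fun i : ℤ => α ^ i) (fun i hi => hi) hinj.injOn hfin

/-- Let `N` be a finitely generated `A_α`-module with `k`-basis `b` (of size `e`), let
`χ j` be the matrix of multiplication by `x_{j+1}` on `N`, and let
`Ω i = [[χ₁, αⁱχ₃],[χ₄, χ₂]]` (a `2e × 2e` matrix over `k`). If `α` has infinite order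
and `r = max_i rank Ω_i`, then `rank Ω_i < r` for at most `c(N) = dim_k N − dim_k Socle N`
values of `i ∈ ℤ`. -/
theorem stmt18 (k : Type) [Field k] (α : k) (hα : α ≠ 0)
    (hord : ∀ n : ℕ, 0 < n → α ^ n ≠ 1)
    (N : Type) [AddCommGroup N] [Module (GP k α) N] [Module.Finite (GP k α) N]
    (e : ℕ) (b : Module.Basis (Fin e) k (RestrictScalars k (GP k α) N))
    (χ : Fin 5 → Matrix (Fin e) (Fin e) k)
    (hχ : ∀ j : Fin 5, ∀ v : RestrictScalars k (GP k α) N,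
      RestrictScalars.addEquiv k (GP k α) N ((Matrix.toLin b b (χ j)) v) =
        gpx α j • RestrictScalars.addEquiv k (GP k α) N v)
    (Ω : ℤ → Matrix (Fin e ⊕ Fin e) (Fin e ⊕ Fin e) k)
    (hΩ : ∀ i : ℤ, Ω i = Matrix.fromBlocks (χ 0) ((α ^ i) • χ 2) (χ 3) (χ 1))
    (r : ℕ) (hr : r = ⨆ i : ℤ, (Ω i).rank)
    (c : ℕ)
    (hc : c = Module.finrank k (RestrictScalars k (GP k α) N) -
      Module.finrank k (RestrictScalars k (GP k α)
        (Submodule.torsionBySet (GP k α) N ((gpm k α : Ideal (GP k α)) : Set (GP k α))))) :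
    {i : ℤ | (Ω i).rank < r}.Finite ∧ Nat.card {i : ℤ | (Ω i).rank < r} ≤ c :=
  stmt18_general k α hα hord N e b χ hχ Ω hΩ r hr c hc
end
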